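/- arXiv:1510.02114 — 3 statements merged into one kernel-verified Lean document; each statement's English description precedes it below -/
import Mathlib

section
/- Let p be a prime, L a finite extension of ℚ_p with ring of integers O_L, and n ≥ 1. Let Σ_n ⊂ (O_{C_p})^n be the set of points of the form (ζ_1 − 1, …, ζ_n − 1) where each ζ_i is a root of unity of p-power order. If f ∈ O_L⟦X_1, …, X_n⟧ ⊗ L satisfies f(x) = 0 for all but finitely many x ∈ Σ_n, then f = 0. -/
/-!
The norms of the coefficients lie in the value set of a finite extension of `ℚ_p`, which is
discrete away from `0`; so the maximal coefficient norm `A` is attained and isolated, and there is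
a lexicographically least exponent `δ` with `‖a_δ‖ = A`. For a primitive `p^(m+1)`-th root of unity
`ζ`, `‖ζ - 1‖ ^ (p^m (p-1)) = p⁻¹`. Hence at the point `x_i = ζ_(M + b i) - 1` we get
`‖x_i‖ = q ^ t_i` with `q = ‖x_(n-1)‖` and `t_i = p^(b (n-1-i))`, so `‖x^d‖ = q ^ (∑ t_i d_i)`.
With `p^b > deg δ` these weights refine the lexicographic order at `δ`, and as `M → ∞` the norm
`q` tends to `1`. So the single term `a_δ x^δ` strictly dominates all others and the ultrametric
inequality gives `f(x) ≠ 0` for every large `M`: infinitely many points of `Σ_n`.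
-/

open Filter Topology Finset

namespace IsUltrametricDist

theorem tsum_ne_zero_of_dominant {M ι : Type*} [NormedAddCommGroup M] [IsUltrametricDist M]
    {u : ι → M} (hu : Summable u) (i₀ : ι) {s : ℝ} (hs₀ : 0 ≤ s) (hs : ∀ i ≠ i₀, ‖u i‖ ≤ s)
    (hlt : s < ‖u i₀‖) : ∑' i, u i ≠ 0 := by
  classical
  have hrest : ‖∑' i, if i = i₀ then 0 else u i‖ ≤ s :=
    norm_tsum_le_of_forall_le_of_nonneg hs₀ fun i => by
      split_ifs with h
      · simpa using hs₀
      · exact hs i h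
  rw [hu.tsum_eq_add_tsum_ite i₀, ← norm_ne_zero_iff,
    norm_add_eq_max_of_norm_ne_norm (hrest.trans_lt hlt).ne']
  exact (hs₀.trans_lt (hlt.trans_le (le_max_left _ _))).ne'

theorem finite_norm_image_of_le {E : Type*} [NormedAddCommGroup E] [IsUltrametricDist E]
    [ProperSpace E] {c : ℝ} (hc : 0 < c) (b : ℝ) :
    (norm '' {x : E | c ≤ ‖x‖ ∧ ‖x‖ ≤ b}).Finite := by
  set S := {x : E | c ≤ ‖x‖ ∧ ‖x‖ ≤ b}
  have hS : IsCompact S := (isCompact_closedBall (0 : E) b).of_isClosed_subset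
    ((isClosed_le continuous_const continuous_norm).inter
      (isClosed_le continuous_norm continuous_const))
    fun x hx => mem_closedBall_zero_iff.2 hx.2
  -- on the ball of radius `‖x‖` around `x` the norm is constantly `‖x‖`
  obtain ⟨F, -, hF, hcover⟩ := hS.elim_finite_subcover_image (b := S)
    (c := fun x => Metric.ball x ‖x‖) (fun _ _ => Metric.isOpen_ball)
    fun x hx => Set.mem_biUnion hx (Metric.mem_ball_self (hc.trans_le hx.1))
  refine (hF.image norm).subset ?_
  rintro _ ⟨y, hy, rfl⟩
  obtain ⟨x, hxF, hyx⟩ := Set.mem_iUnion₂.1 (hcover hy)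
  refine ⟨x, hxF, ?_⟩
  rw [Metric.mem_ball, dist_eq_norm] at hyx
  rw [← sub_add_cancel y x, norm_add_eq_max_of_norm_ne_norm hyx.ne, max_eq_right hyx.le]

variable {K : Type*} [NormedField K] [IsUltrametricDist K]

theorem summable_mul_prod_pow [CompleteSpace K] {σ : Type*} [Fintype σ] {c : (σ →₀ ℕ) → K}
    {B : ℝ} (hc : ∀ d, ‖c d‖ ≤ B) {x : σ → K} {r : ℝ} (hr : r < 1) (hx : ∀ i, ‖x i‖ ≤ r) :
    Summable fun d : σ →₀ ℕ => c d * ∏ i, x i ^ d i := by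
  set r' := max r 0
  have hdeg : Tendsto (fun d : σ →₀ ℕ => d.degree) cofinite atTop :=
    tendsto_atTop.2 fun N => by
      simpa only [Set.mem_ofPred_eq, not_lt] using
        (Finsupp.finite_of_degree_lt (σ := σ) N).eventually_cofinite_notMem
  have hbound (d : σ →₀ ℕ) : ‖c d * ∏ i, x i ^ d i‖ ≤ B * r' ^ d.degree := by
    rw [norm_mul, norm_prod, Finsupp.degree_eq_sum, ← prod_pow_eq_pow_sum]
    refine mul_le_mul (hc d) (prod_le_prod (fun i _ => norm_nonneg _) fun i _ => ?_)
      (prod_nonneg fun i _ => norm_nonneg _) ((norm_nonneg _).trans (hc d))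
    rw [norm_pow]
    exact pow_le_pow_left₀ (norm_nonneg _) ((hx i).trans (le_max_left _ _)) _
  refine NonarchimedeanAddGroup.summable_of_tendsto_cofinite_zero (squeeze_zero_norm hbound ?_)
  simpa using ((tendsto_pow_atTop_nhds_zero_of_lt_one (le_max_right _ _)
    (max_lt hr one_pos)).comp hdeg).const_mul B

theorem norm_pow_sub_one_le {x : K} (hx : ‖x‖ ≤ 1) (k : ℕ) : ‖x ^ k - 1‖ ≤ ‖x - 1‖ := by
  rw [← geom_sum_mul, norm_mul]
  refine mul_le_of_le_one_left (norm_nonneg _) ?_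
  exact norm_sum_le_of_forall_le_of_nonneg zero_le_one fun i _ => by
    rw [norm_pow]; exact pow_le_one₀ (norm_nonneg _) hx

end IsUltrametricDist

theorem exists_eq_or_le_of_finite_range_inter_Ici {ι : Type*} {v : ι → ℝ} {c : ℝ}
    (hfin : (Set.range v ∩ Set.Ici c).Finite) {i₁ : ι} (hi₁ : c < v i₁) :
    ∃ i₀, ∃ ρ < v i₀, c ≤ ρ ∧ ∀ i, v i = v i₀ ∨ v i ≤ ρ := by
  set F := hfin.toFinset
  have hmem {i} (hi : c ≤ v i) : v i ∈ F := hfin.mem_toFinset.2 ⟨⟨i, rfl⟩, hi⟩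
  have hF : F.Nonempty := ⟨_, hmem hi₁.le⟩
  obtain ⟨⟨i₀, hi₀⟩, -⟩ := hfin.mem_toFinset.1 (F.max'_mem hF)
  set ρ := (insert c (F.erase (v i₀))).max' (insert_nonempty _ _)
  have hcρ : c ≤ ρ := le_max' _ _ (mem_insert_self _ _)
  refine ⟨i₀, ρ, ?_, hcρ, fun i => ?_⟩
  · refine (max'_lt_iff _ _).2 fun v hv => ?_
    rcases mem_insert.1 hv with rfl | hv
    · exact hi₁.trans_le (hi₀ ▸ F.le_max' _ (hmem hi₁.le))
    · obtain ⟨hne, hvF⟩ := mem_erase.1 hv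
      exact (hi₀ ▸ F.le_max' _ hvF).lt_of_ne hne
  · by_cases hci : c ≤ v i
    · by_cases he : v i = v i₀
      · exact .inl he
      · exact .inr (le_max' _ _ (mem_insert_of_mem (mem_erase.2 ⟨he, hmem hci⟩)))
    · exact .inr ((not_le.1 hci).le.trans hcρ)

theorem exists_norm_eq_or_le_of_forall_norm_le {E ι : Type*} [NormedAddCommGroup E]
    [IsUltrametricDist E] [ProperSpace E] {a : ι → E} {B : ℝ} (hB : ∀ i, ‖a i‖ ≤ B) {i₁ : ι}
    (hi₁ : a i₁ ≠ 0) : ∃ i₀, ∃ ρ < ‖a i₀‖, 0 ≤ ρ ∧ ∀ i, ‖a i‖ = ‖a i₀‖ ∨ ‖a i‖ ≤ ρ := by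
  have hc : 0 < ‖a i₁‖ / 2 := half_pos (norm_pos_iff.2 hi₁)
  have hfin : (Set.range (‖a ·‖) ∩ Set.Ici (‖a i₁‖ / 2)).Finite :=
    (IsUltrametricDist.finite_norm_image_of_le hc B).subset <| by
      rintro _ ⟨⟨i, rfl⟩, hi⟩
      exact ⟨a i, ⟨hi, hB i⟩, rfl⟩
  obtain ⟨i₀, ρ, hρ, hcρ, hgap⟩ :=
    exists_eq_or_le_of_finite_range_inter_Ici hfin (half_lt_self (norm_pos_iff.2 hi₁))
  exact ⟨i₀, ρ, hρ, hc.le.trans hcρ, hgap⟩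

section RootsOfUnity

variable {K : Type*} [NormedField K] {p : ℕ} [hp : Fact p.Prime]

theorem IsPrimitiveRoot.norm_sub_one_pos {ζ : K} {m : ℕ} (hζ : IsPrimitiveRoot ζ (p ^ (m + 1))) :
    0 < ‖ζ - 1‖ :=
  norm_pos_iff.2 <| sub_ne_zero.2 <| hζ.ne_one (Nat.one_lt_pow (Nat.succ_ne_zero m) hp.out.one_lt)

variable [IsUltrametricDist K]

theorem IsPrimitiveRoot.norm_sub_one_eq {ζ μ : K} {k : ℕ} [NeZero k] (hζ : IsPrimitiveRoot ζ k)
    (hμ : IsPrimitiveRoot μ k) : ‖μ - 1‖ = ‖ζ - 1‖ := by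
  have key {ζ μ : K} (hζ : IsPrimitiveRoot ζ k) (hμ : IsPrimitiveRoot μ k) :
      ‖μ - 1‖ ≤ ‖ζ - 1‖ := by
    obtain ⟨i, -, rfl⟩ := hζ.eq_pow_of_pow_eq_one hμ.pow_eq_one
    have hζ₁ : ‖ζ‖ = 1 := (pow_eq_one_iff_of_nonneg (norm_nonneg ζ) (NeZero.ne k)).1 <| by
      rw [← norm_pow, hζ.pow_eq_one, norm_one]
    exact IsUltrametricDist.norm_pow_sub_one_le hζ₁.le i
  exact (key hζ hμ).antisymm (key hμ hζ)

theorem IsPrimitiveRoot.norm_sub_one_pow_totient (hpK : ‖(p : K)‖ = (p : ℝ)⁻¹) {ζ : K} {m : ℕ}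
    (hζ : IsPrimitiveRoot ζ (p ^ (m + 1))) : ‖ζ - 1‖ ^ (p ^ m * (p - 1)) = (p : ℝ)⁻¹ := by
  have : NeZero (p ^ (m + 1)) := ⟨pow_ne_zero _ hp.out.ne_zero⟩
  have hprod : (p : K) = ∏ μ ∈ primitiveRoots (p ^ (m + 1)) K, (1 - μ) := by
    simp [← Polynomial.eval_one_cyclotomic_prime_pow (R := K) m,
      Polynomial.cyclotomic_eq_prod_X_sub_primitiveRoots hζ, Polynomial.eval_prod]
  rw [← hpK, hprod, norm_prod, prod_congr rfl fun μ hμ => by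
      rw [norm_sub_rev, hζ.norm_sub_one_eq (isPrimitiveRoot_of_mem_primitiveRoots hμ)],
    prod_const, hζ.card_primitiveRoots, Nat.totient_prime_pow_succ hp.out]

theorem IsPrimitiveRoot.norm_sub_one_lt_one (hpK : ‖(p : K)‖ = (p : ℝ)⁻¹) {ζ : K} {m : ℕ}
    (hζ : IsPrimitiveRoot ζ (p ^ (m + 1))) : ‖ζ - 1‖ < 1 := by
  by_contra! h
  have := one_le_pow₀ h (n := p ^ m * (p - 1))
  rw [hζ.norm_sub_one_pow_totient hpK] at this
  exact this.not_gt (inv_lt_one_of_one_lt₀ (mod_cast hp.out.one_lt))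

theorem IsPrimitiveRoot.norm_sub_one_pow_prime_pow (hpK : ‖(p : K)‖ = (p : ℝ)⁻¹) {ζ ξ : K}
    {m k : ℕ} (hζ : IsPrimitiveRoot ζ (p ^ (m + k + 1))) (hξ : IsPrimitiveRoot ξ (p ^ (m + 1))) :
    ‖ζ - 1‖ ^ p ^ k = ‖ξ - 1‖ := by
  have hN : p ^ m * (p - 1) ≠ 0 :=
    mul_ne_zero (pow_ne_zero _ hp.out.ne_zero) (Nat.sub_ne_zero_of_lt hp.out.one_lt)
  refine (pow_left_inj₀ (by positivity) (norm_nonneg _) hN).1 ?_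
  rw [hξ.norm_sub_one_pow_totient hpK, ← pow_mul, ← mul_assoc, ← pow_add, add_comm k,
    hζ.norm_sub_one_pow_totient hpK]

variable {ζ : ℕ → K}

theorem norm_sub_one_eq_pow_of_isPrimitiveRoot (hpK : ‖(p : K)‖ = (p : ℝ)⁻¹)
    (hζ : ∀ m, IsPrimitiveRoot (ζ m) (p ^ (m + 1))) {m N : ℕ} (h : m ≤ N) :
    ‖ζ m - 1‖ = ‖ζ N - 1‖ ^ p ^ (N - m) := by
  obtain ⟨k, rfl⟩ := Nat.exists_eq_add_of_le h
  rw [Nat.add_sub_cancel_left]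
  exact ((hζ (m + k)).norm_sub_one_pow_prime_pow hpK (hζ m)).symm

theorem tendsto_norm_sub_one_of_isPrimitiveRoot (hpK : ‖(p : K)‖ = (p : ℝ)⁻¹)
    (hζ : ∀ m, IsPrimitiveRoot (ζ m) (p ^ (m + 1))) :
    Tendsto (fun m => ‖ζ m - 1‖) atTop (𝓝 1) := by
  have hN : Tendsto (fun m => p ^ m * (p - 1)) atTop atTop :=
    tendsto_atTop_mono (fun m => (Nat.lt_pow_self hp.out.one_lt).le.trans
      (Nat.le_mul_of_pos_right _ (Nat.sub_pos_of_lt hp.out.one_lt))) tendsto_id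
  have hrpow (m : ℕ) : ‖ζ m - 1‖ = (p : ℝ)⁻¹ ^ (((p ^ m * (p - 1) : ℕ) : ℝ)⁻¹) := by
    rw [← (hζ m).norm_sub_one_pow_totient hpK, Real.pow_rpow_inv_natCast (norm_nonneg _)]
    exact mul_ne_zero (pow_ne_zero _ hp.out.ne_zero) (Nat.sub_ne_zero_of_lt hp.out.one_lt)
  rw [tendsto_congr hrpow, ← Real.rpow_zero (p : ℝ)⁻¹]
  exact (Real.continuousAt_const_rpow
    (inv_ne_zero (Nat.cast_ne_zero.2 hp.out.ne_zero))).tendsto.comp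
    (tendsto_inv_atTop_zero.comp (tendsto_natCast_atTop_atTop.comp hN))

end RootsOfUnity

theorem sum_mul_lt_sum_mul_of_toLex_lt {ι : Type*} [LinearOrder ι] [Fintype ι] {t : ι → ℕ}
    {δ d : ι →₀ ℕ} (ht : ∀ i, ∑ j with i < j, t j * δ j < t i) (h : toLex δ < toLex d) :
    ∑ j, t j * δ j < ∑ j, t j * d j := by
  obtain ⟨i, hlt, hi⟩ := Finsupp.lex_def.1 h
  simp only [ofLex_toLex] at hlt hi
  have hIoi : (univ.filter fun j => ¬j < i).erase i = univ.filter (i < ·) := by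
    ext j
    simp only [mem_erase, mem_filter, mem_univ, true_and, not_lt]
    exact ⟨fun h => lt_of_le_of_ne h.2 (Ne.symm h.1), fun h => ⟨h.ne', h.le⟩⟩
  have hsplit (e : ι →₀ ℕ) : ∑ j, t j * e j =
      ∑ j with j < i, t j * e j + (t i * e i + ∑ j with i < j, t j * e j) := by
    rw [← sum_filter_add_sum_filter_not univ (· < i)]
    congr 1
    rw [← add_sum_erase _ _ (a := i) (by simp), hIoi]
  rw [hsplit δ, hsplit d, sum_congr rfl fun j hj => by rw [hlt j (mem_filter.1 hj).2]]
  have := ht i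
  have : t i * δ i + t i ≤ t i * d i := by rw [← mul_add_one]; exact Nat.mul_le_mul_left _ hi
  omega

theorem sum_filter_gt_pow_mul_lt_pow {n β : ℕ} {δ : Fin n →₀ ℕ} (hβ : δ.degree < β)
    (i : Fin n) : ∑ j with i < j, β ^ (n - 1 - j) * δ j < β ^ (n - 1 - i) := by
  have hβ₀ : 0 < β := (Nat.zero_le _).trans_lt hβ
  refine Nat.lt_of_mul_lt_mul_right (a := β) ?_
  calc (∑ j with i < j, β ^ (n - 1 - j) * δ j) * β
      ≤ ∑ j with i < j, β ^ (n - 1 - i) * δ j := by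
        rw [sum_mul]
        refine sum_le_sum fun j hj => ?_
        have hij : n - 1 - j + 1 ≤ n - 1 - i := by
          have := (mem_filter.1 hj).2; have := j.isLt; omega
        calc β ^ (n - 1 - j) * δ j * β = β ^ (n - 1 - j + 1) * δ j := by ring
          _ ≤ β ^ (n - 1 - i) * δ j := Nat.mul_le_mul_right _ (Nat.pow_le_pow_right hβ₀ hij)
    _ ≤ β ^ (n - 1 - i) * δ.degree := by
        rw [← mul_sum, Finsupp.degree_eq_sum]
        exact Nat.mul_le_mul_left _ (sum_le_sum_of_subset (filter_subset _ _))
    _ < β ^ (n - 1 - i) * β := Nat.mul_lt_mul_of_pos_left hβ (pow_pos hβ₀ _)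

theorem tsum_mul_prod_pow_ne_zero_of_toLex_min {K ι : Type*} [NormedField K]
    [IsUltrametricDist K] [CompleteSpace K] [LinearOrder ι] [Fintype ι] {c : (ι →₀ ℕ) → K}
    {A ρ : ℝ} (hρ : 0 ≤ ρ) (hgap : ∀ d, ‖c d‖ = A ∨ ‖c d‖ ≤ ρ) {δ : ι →₀ ℕ} (hδ : ‖c δ‖ = A)
    (hδmin : ∀ d, ‖c d‖ = A → toLex δ ≤ toLex d) {t : ι → ℕ}
    (ht : ∀ i, ∑ j with i < j, t j * δ j < t i) {x : ι → K} {q : ℝ} (hq₀ : 0 < q) (hq₁ : q < 1)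
    (hx : ∀ i, ‖x i‖ = q ^ t i) (hdom : ρ < A * q ^ ∑ i, t i * δ i) :
    ∑' d, c d * ∏ i, x i ^ d i ≠ 0 := by
  have hnorm (d : ι →₀ ℕ) : ‖c d * ∏ i, x i ^ d i‖ = ‖c d‖ * q ^ ∑ i, t i * d i := by
    simp only [norm_mul, norm_prod, norm_pow, hx, ← pow_mul, prod_pow_eq_pow_sum]
  have hA : 0 < A := pos_of_mul_pos_left (hρ.trans_lt hdom) (by positivity)
  have hcA (d : ι →₀ ℕ) : ‖c d‖ ≤ A := (hgap d).elim le_of_eq fun h => h.trans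
    ((hdom.trans_le (mul_le_of_le_one_right hA.le (pow_le_one₀ hq₀.le hq₁.le))).le)
  have hxq (i : ι) : ‖x i‖ ≤ q :=
    hx i ▸ pow_le_of_le_one hq₀.le hq₁.le ((Nat.zero_le _).trans_lt (ht i)).ne'
  set w := ∑ i, t i * δ i
  refine IsUltrametricDist.tsum_ne_zero_of_dominant
    (IsUltrametricDist.summable_mul_prod_pow hcA hq₁ hxq) δ (le_max_of_le_left hρ)
    (s := max ρ (A * q ^ (w + 1))) (fun d hd => ?_) ?_
  · rw [hnorm]
    rcases hgap d with h | h
    · have hw : w + 1 ≤ ∑ i, t i * d i :=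
        sum_mul_lt_sum_mul_of_toLex_lt ht ((hδmin d h).lt_of_ne (by simpa using hd.symm))
      refine le_max_of_le_right ?_
      rw [h]
      exact mul_le_mul_of_nonneg_left (pow_le_pow_of_le_one hq₀.le hq₁.le hw) hA.le
    · exact le_max_of_le_left
        ((mul_le_of_le_one_right (norm_nonneg _) (pow_le_one₀ hq₀.le hq₁.le)).trans h)
  · rw [hnorm, hδ]
    exact max_lt hdom (mul_lt_mul_of_pos_left (pow_lt_pow_right_of_lt_one₀ hq₀ hq₁ (by omega)) hA)

section RootPoints

variable {K : Type*} [NormedField K] [IsUltrametricDist K] [CompleteSpace K] {p : ℕ}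
  [hp : Fact p.Prime] {ζ : ℕ → K} {n : ℕ} {c : (Fin n →₀ ℕ) → K} {A ρ : ℝ} {δ : Fin n →₀ ℕ}

theorem tsum_mul_prod_pow_sub_one_ne_zero (hpK : ‖(p : K)‖ = (p : ℝ)⁻¹)
    (hζ : ∀ m, IsPrimitiveRoot (ζ m) (p ^ (m + 1))) (hn : 1 ≤ n) (hρ : 0 ≤ ρ) (hρA : ρ < A)
    (hgap : ∀ d, ‖c d‖ = A ∨ ‖c d‖ ≤ ρ) (hδ : ‖c δ‖ = A)
    (hδmin : ∀ d, ‖c d‖ = A → toLex δ ≤ toLex d) {M : ℕ}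
    (hM : ρ / A < ‖ζ M - 1‖ ^ δ.degree) :
    ∑' d, c d * ∏ i : Fin n, (ζ (M + δ.degree * i) - 1) ^ d i ≠ 0 := by
  set b := δ.degree
  set N := M + b * (n - 1)
  have hx (i : Fin n) : ‖ζ (M + b * i) - 1‖ = ‖ζ N - 1‖ ^ (p ^ b) ^ (n - 1 - i) := by
    have hi : b * i ≤ b * (n - 1) := Nat.mul_le_mul_left b (by omega)
    rw [norm_sub_one_eq_pow_of_isPrimitiveRoot hpK hζ (N := N) (by omega), ← pow_mul,
      Nat.mul_sub]
    congr 2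
    omega
  have hA : 0 < A := hρ.trans_lt hρA
  have hq₀ := (hζ N).norm_sub_one_pos
  have hq₁ := (hζ N).norm_sub_one_lt_one hpK
  have hweight : ∑ i : Fin n, (p ^ b) ^ (n - 1 - i) * δ i ≤ (p ^ b) ^ (n - 1) * b :=
    calc ∑ i : Fin n, (p ^ b) ^ (n - 1 - i) * δ i ≤ ∑ i, (p ^ b) ^ (n - 1) * δ i :=
          sum_le_sum fun i _ => Nat.mul_le_mul_right _
            (Nat.pow_le_pow_right (pow_pos hp.out.pos b) (Nat.sub_le _ _))
      _ = (p ^ b) ^ (n - 1) * b := by rw [← mul_sum, ← Finsupp.degree_eq_sum]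
  refine tsum_mul_prod_pow_ne_zero_of_toLex_min hρ hgap hδ hδmin
    (sum_filter_gt_pow_mul_lt_pow (Nat.lt_pow_self hp.out.one_lt)) hq₀ hq₁ hx ?_
  calc ρ = A * (ρ / A) := (mul_div_cancel₀ ρ hA.ne').symm
    _ < A * ‖ζ M - 1‖ ^ b := mul_lt_mul_of_pos_left hM hA
    _ = A * ‖ζ N - 1‖ ^ ((p ^ b) ^ (n - 1) * b) := by
      simpa [pow_mul] using congr_arg (A * · ^ b) (hx ⟨0, hn⟩)
    _ ≤ _ := mul_le_mul_of_nonneg_left (pow_le_pow_of_le_one hq₀.le hq₁.le hweight) hA.le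

theorem infinite_setOf_tsum_ne_zero (hpK : ‖(p : K)‖ = (p : ℝ)⁻¹)
    (hζ : ∀ m, IsPrimitiveRoot (ζ m) (p ^ (m + 1))) (hn : 1 ≤ n) (hρ : 0 ≤ ρ) (hρA : ρ < A)
    (hA : ∃ d, ‖c d‖ = A) (hgap : ∀ d, ‖c d‖ = A ∨ ‖c d‖ ≤ ρ) :
    {x : Fin n → K | (∀ i, ∃ k : ℕ, (x i + 1) ^ p ^ k = 1) ∧
      ∑' d, c d * ∏ i, x i ^ d i ≠ 0}.Infinite := by
  obtain ⟨δ, hδ, hδmin⟩ : ∃ δ, ‖c δ‖ = A ∧ ∀ d, ‖c d‖ = A → toLex δ ≤ toLex d := by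
    obtain ⟨d₀, hd₀⟩ := hA
    obtain ⟨δ, hδ, hmin⟩ := wellFounded_lt.has_min {e : Lex (Fin n →₀ ℕ) | ‖c (ofLex e)‖ = A}
      ⟨toLex d₀, hd₀⟩
    exact ⟨ofLex δ, hδ, fun d hd => not_lt.1 (hmin (toLex d) hd)⟩
  obtain ⟨M₀, hM₀⟩ := eventually_atTop.1 <|
    ((tendsto_norm_sub_one_of_isPrimitiveRoot hpK hζ).pow δ.degree).eventually_const_lt
      (by rw [one_pow]; exact (div_lt_one (hρ.trans_lt hρA)).2 hρA)
  refine Set.infinite_of_injective_forall_mem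
    (f := fun k i => ζ (M₀ + k + δ.degree * i) - 1) (fun k k' h => ?_) fun k =>
      ⟨fun i => ⟨_, by rw [sub_add_cancel]; exact (hζ _).pow_eq_one⟩,
        tsum_mul_prod_pow_sub_one_ne_zero hpK hζ hn hρ hρA hgap hδ hδmin
          (hM₀ _ (Nat.le_add_right _ _))⟩
  have h0 := congr_fun h ⟨0, hn⟩
  simp only [mul_zero, add_zero, sub_left_inj] at h0
  have := Nat.pow_right_injective hp.out.two_le ((hζ (M₀ + k)).unique (h0 ▸ hζ (M₀ + k')))
  omega

end RootPoints

/-- Let `L` be a finite extension of `ℚ_p` and let `C` be a model of `ℂ_p`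
(a complete algebraically closed normed field isometrically containing `L`).  Let
`Σ_n ⊂ O_C^n` be the set of points `(ζ₁ - 1, …, ζ_n - 1)` with each `ζᵢ` a root of unity of
`p`-power order.  If `f ∈ O_L⟦X₁, …, X_n⟧ ⊗ L` (a multivariable power series with bounded
coefficients) vanishes at all but finitely many points of `Σ_n`, then `f = 0`. -/
theorem mv_power_series_vanishing_on_padic_roots_of_unity
    (p : ℕ) [hp : Fact p.Prime]
    (L : Type*) [NormedField L] [Algebra ℚ_[p] L] [FiniteDimensional ℚ_[p] L]
    (hL : ∀ x : ℚ_[p], ‖algebraMap ℚ_[p] L x‖ = ‖x‖)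
    (C : Type*) [NormedField C] [CompleteSpace C] [IsAlgClosed C]
    (σ : L →+* C) (hσ : ∀ x : L, ‖σ x‖ = ‖x‖)
    (n : ℕ) (hn : 1 ≤ n) (f : MvPowerSeries (Fin n) L)
    (hbd : ∃ B : ℝ, ∀ d : Fin n →₀ ℕ, ‖MvPowerSeries.coeff d f‖ ≤ B)
    (hvan : {x : Fin n → C |
        (∀ i, ∃ k : ℕ, (x i + 1) ^ p ^ k = 1) ∧
        ∑' d : Fin n →₀ ℕ, σ (MvPowerSeries.coeff d f) * ∏ i, x i ^ d i ≠ 0}.Finite) :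
    f = 0 := by
  have hnatL (m : ℕ) : ‖(m : L)‖ ≤ 1 := by
    rw [← map_natCast (algebraMap ℚ_[p] L), hL, ← Int.cast_natCast]
    exact Padic.norm_int_le_one m
  have : IsUltrametricDist L :=
    IsUltrametricDist.isUltrametricDist_of_forall_norm_natCast_le_one hnatL
  have : IsUltrametricDist C := IsUltrametricDist.isUltrametricDist_of_forall_norm_natCast_le_one
    fun m => by rw [← map_natCast σ, hσ]; exact hnatL m
  have hpC : ‖(p : C)‖ = (p : ℝ)⁻¹ := by
    rw [← map_natCast σ, hσ, ← map_natCast (algebraMap ℚ_[p] L), hL, Padic.norm_p]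
  have : NeZero (p : C) := ⟨fun h => by simp [h, eq_comm, hp.out.ne_zero] at hpC⟩
  choose ζ hζ using fun m => HasEnoughRootsOfUnity.exists_primitiveRoot C (p ^ (m + 1))
  let : NormedSpace ℚ_[p] L := ⟨fun c x => by rw [Algebra.smul_def, norm_mul, hL]⟩
  have : ProperSpace L := FiniteDimensional.proper ℚ_[p] L
  by_contra hf
  obtain ⟨d₁, hd₁⟩ := (MvPowerSeries.ne_zero_iff_exists_coeff_ne_zero f).1 hf
  obtain ⟨B, hB⟩ := hbd
  obtain ⟨d₀, ρ, hρA, hρ, hgap⟩ := exists_norm_eq_or_le_of_forall_norm_le hB hd₁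
  exact infinite_setOf_tsum_ne_zero hpC hζ hn hρ hρA (c := fun d => σ (MvPowerSeries.coeff d f))
    ⟨d₀, hσ _⟩ (fun d => by simpa only [hσ] using hgap d) hvan
end

section
/- Let p be a prime and L a finite extension of ℚ_p with ring of integers O_L. If f ∈ O_L⟦X⟧ vanishes at ζ − 1 for infinitely many roots of unity ζ of p-power order (the values being taken in C_p, where the series converges since |ζ−1| < 1), then f = 0. -/
/-!
Since `L` is locally compact and ultrametric, the norms of the coefficients of `f` that exceed a
given positive bound take only finitely many values, so some coefficient `a_d` (the first one)
has maximal norm. For `r < ‖t‖ < 1` with `r` close enough to `1` the term `a_d t^d` then strictly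
dominates every other term, so `f(t) ≠ 0`. On the other hand a binomial estimate shows that
`‖ζ - 1‖ ^ ((p - 1) p^N) ≥ 1/p` whenever `ζ ^ (p^N) ≠ 1`, so all but finitely many of the points
`ζ - 1` lie in that annulus.
-/

open Filter Topology

section RootsOfUnity

variable {C : Type*} [NormedField C] [IsUltrametricDist C] {p : ℕ}

theorem norm_natCast_le_inv_of_dvd (hCp : ‖(p : C)‖ = (p : ℝ)⁻¹) {n : ℕ} (h : p ∣ n) :
    ‖(n : C)‖ ≤ (p : ℝ)⁻¹ := by
  obtain ⟨m, rfl⟩ := h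
  rw [Nat.cast_mul, norm_mul, hCp]
  exact mul_le_of_le_one_right (by positivity) (IsUltrametricDist.norm_natCast_le_one C m)

variable [hp : Fact p.Prime]

theorem norm_pow_sub_one_sub_sub_le (hCp : ‖(p : C)‖ = (p : ℝ)⁻¹) {x : C} (hx : ‖x - 1‖ ≤ 1) :
    ‖x ^ p - 1 - p * (x - 1) - (x - 1) ^ p‖ ≤ (p : ℝ)⁻¹ * ‖x - 1‖ ^ 2 := by
  obtain ⟨q, hq⟩ : ∃ q, p = q + 2 := ⟨p - 2, by have := hp.out.two_le; omega⟩
  have hexpand : x ^ p - 1 - p * (x - 1) - (x - 1) ^ p =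
      ∑ m ∈ Finset.range q, (x - 1) ^ (m + 2) * (p.choose (m + 2) : C) := by
    conv_lhs => rw [show x = (x - 1) + 1 by ring, add_sub_cancel_right, add_pow]
    subst hq
    rw [Finset.sum_range_succ, Finset.sum_range_succ', Finset.sum_range_succ']
    simp [Nat.choose_self]
    ring
  rw [hexpand]
  refine IsUltrametricDist.norm_sum_le_of_forall_le_of_nonneg (by positivity) fun m hm => ?_
  have hdvd : p ∣ p.choose (m + 2) :=
    hp.out.dvd_choose_self (by omega) (by rw [Finset.mem_range] at hm; omega)
  rw [norm_mul, norm_pow, mul_comm]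
  exact mul_le_mul (norm_natCast_le_inv_of_dvd hCp hdvd)
    (pow_le_pow_of_le_one (norm_nonneg _) hx (by omega)) (by positivity) (by positivity)

theorem norm_pow_sub_one_le_max (hCp : ‖(p : C)‖ = (p : ℝ)⁻¹) {x : C} (hx : ‖x - 1‖ ≤ 1) :
    ‖x ^ p - 1‖ ≤ max ((p : ℝ)⁻¹ * ‖x - 1‖) (‖x - 1‖ ^ p) := by
  have hE := norm_pow_sub_one_sub_sub_le hCp hx
  have hlin : ‖(p : C) * (x - 1)‖ = (p : ℝ)⁻¹ * ‖x - 1‖ := by rw [norm_mul, hCp]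
  have hsq : (p : ℝ)⁻¹ * ‖x - 1‖ ^ 2 ≤ (p : ℝ)⁻¹ * ‖x - 1‖ := by
    gcongr; exact pow_le_of_le_one (norm_nonneg _) hx two_ne_zero
  calc ‖x ^ p - 1‖
      = ‖(x ^ p - 1 - p * (x - 1) - (x - 1) ^ p + p * (x - 1)) + (x - 1) ^ p‖ := by ring_nf
    _ ≤ max ‖x ^ p - 1 - p * (x - 1) - (x - 1) ^ p + p * (x - 1)‖ ‖(x - 1) ^ p‖ :=
      IsUltrametricDist.norm_add_le_max _ _
    _ ≤ max ((p : ℝ)⁻¹ * ‖x - 1‖) (‖x - 1‖ ^ p) := by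
      rw [norm_pow]
      gcongr
      exact (IsUltrametricDist.norm_add_le_max _ _).trans (max_le (hE.trans hsq) hlin.le)

theorem norm_pow_sub_one_eq_one (hCp : ‖(p : C)‖ = (p : ℝ)⁻¹) {x : C} (hx : ‖x - 1‖ = 1) :
    ‖x ^ p - 1‖ = 1 := by
  have hsmall : ‖x ^ p - 1 - p * (x - 1) - (x - 1) ^ p + p * (x - 1)‖ < 1 := by
    have hE := norm_pow_sub_one_sub_sub_le hCp hx.le
    have hlin : ‖(p : C) * (x - 1)‖ = (p : ℝ)⁻¹ := by rw [norm_mul, hCp, hx, mul_one]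
    rw [hx, one_pow, mul_one] at hE
    exact (IsUltrametricDist.norm_add_le_max _ _).trans_lt
      (max_lt (hE.trans_lt (inv_lt_one_of_one_lt₀ (mod_cast hp.out.one_lt)))
        (hlin.trans_lt (inv_lt_one_of_one_lt₀ (mod_cast hp.out.one_lt))))
  have htop : ‖(x - 1) ^ p‖ = 1 := by rw [norm_pow, hx, one_pow]
  rw [show x ^ p - 1 = (x - 1) ^ p + (x ^ p - 1 - p * (x - 1) - (x - 1) ^ p + p * (x - 1)) by ring,
    IsUltrametricDist.norm_add_eq_max_of_norm_ne_norm (htop ▸ hsmall.ne'), htop,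
    max_eq_left hsmall.le]

theorem inv_le_norm_sub_one_pow_of_pow_eq_one (hCp : ‖(p : C)‖ = (p : ℝ)⁻¹) {x : C}
    (h : x ^ p = 1) (hx : x ≠ 1) : (p : ℝ)⁻¹ ≤ ‖x - 1‖ ^ (p - 1) := by
  by_contra! hlt
  have hp1 : p - 1 ≠ 0 := by have := hp.out.two_le; omega
  have hpos : 0 < ‖x - 1‖ := norm_pos_iff.mpr (sub_ne_zero.mpr hx)
  have hlt1 : ‖x - 1‖ < 1 := by
    refine (pow_lt_one_iff_of_nonneg (norm_nonneg _) hp1).mp (hlt.trans ?_)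
    exact inv_lt_one_of_one_lt₀ (mod_cast hp.out.one_lt)
  have hE := norm_pow_sub_one_sub_sub_le hCp hlt1.le
  -- `x ^ p = 1` makes the linear term `p * (x - 1)` cancel the others, which it strictly dominates
  have htop : ‖(x - 1) ^ p‖ < (p : ℝ)⁻¹ * ‖x - 1‖ := by
    calc ‖(x - 1) ^ p‖ = ‖x - 1‖ ^ (p - 1) * ‖x - 1‖ := by
          rw [norm_pow, ← pow_succ, Nat.sub_add_cancel hp.out.one_le]
      _ < (p : ℝ)⁻¹ * ‖x - 1‖ := mul_lt_mul_of_pos_right hlt hpos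
  have hmid : (p : ℝ)⁻¹ * ‖x - 1‖ ^ 2 < (p : ℝ)⁻¹ * ‖x - 1‖ := by
    have := hp.out.pos
    gcongr
    exact pow_lt_self_of_lt_one₀ hpos hlt1 one_lt_two
  have hlin : (p : C) * (x - 1) = -((x ^ p - 1 - p * (x - 1) - (x - 1) ^ p) + (x - 1) ^ p) := by
    rw [h]; ring
  have := congrArg norm hlin
  rw [norm_neg, norm_mul, hCp] at this
  exact (this.trans_le (IsUltrametricDist.norm_add_le_max _ _)).not_gt
    (max_lt (hE.trans_lt hmid) htop)

theorem norm_sub_one_lt_one_of_pow_prime_pow_eq_one (hCp : ‖(p : C)‖ = (p : ℝ)⁻¹) {k : ℕ} {x : C}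
    (h : x ^ p ^ k = 1) : ‖x - 1‖ < 1 := by
  induction k generalizing x with
  | zero => simp_all
  | succ k ih =>
    have hnorm : ‖x‖ = 1 := by
      have := congrArg norm h
      rwa [norm_pow, norm_one, pow_eq_one_iff_of_nonneg (norm_nonneg _)
        (pow_ne_zero _ hp.out.ne_zero)] at this
    have hle : ‖x - 1‖ ≤ 1 := by
      simpa [sub_eq_add_neg, hnorm] using IsUltrametricDist.norm_add_le_max x (-1)
    refine hle.lt_of_ne fun heq => ?_
    have := ih (x := x ^ p) (by rw [← pow_mul, ← pow_succ']; exact h)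
    exact this.ne (norm_pow_sub_one_eq_one hCp heq)

theorem inv_le_norm_sub_one_pow_of_pow_prime_pow_eq_one (hCp : ‖(p : C)‖ = (p : ℝ)⁻¹) {k : ℕ}
    {x : C} (h : x ^ p ^ k = 1) (hx : x ≠ 1) : (p : ℝ)⁻¹ ≤ ‖x - 1‖ ^ (p - 1) := by
  induction k generalizing x with
  | zero => exact absurd (by simpa using h) hx
  | succ k ih =>
    by_cases hxp : x ^ p = 1
    · exact inv_le_norm_sub_one_pow_of_pow_eq_one hCp hxp hx
    have hle := (norm_sub_one_lt_one_of_pow_prime_pow_eq_one hCp h).le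
    have hcontract : ‖x ^ p - 1‖ ≤ ‖x - 1‖ :=
      (norm_pow_sub_one_le_max hCp hle).trans (max_le
        (mul_le_of_le_one_left (norm_nonneg _) (inv_le_one_of_one_le₀ (mod_cast hp.out.one_le)))
        (pow_le_of_le_one (norm_nonneg _) hle hp.out.ne_zero))
    calc (p : ℝ)⁻¹ ≤ ‖x ^ p - 1‖ ^ (p - 1) :=
          ih (by rw [← pow_mul, ← pow_succ']; exact h) hxp
      _ ≤ ‖x - 1‖ ^ (p - 1) := by gcongr

theorem inv_le_norm_sub_one_pow_of_pow_prime_pow_ne_one (hCp : ‖(p : C)‖ = (p : ℝ)⁻¹)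
    {k N : ℕ} {x : C} (h : x ^ p ^ k = 1) (hN : x ^ p ^ N ≠ 1) :
    (p : ℝ)⁻¹ ≤ ‖x - 1‖ ^ ((p - 1) * p ^ N) := by
  induction N generalizing x k with
  | zero =>
    simpa using inv_le_norm_sub_one_pow_of_pow_prime_pow_eq_one hCp h (by simpa using hN)
  | succ N ih =>
    have hxk : (x ^ p) ^ p ^ k = 1 := by rw [← pow_mul, mul_comm, pow_mul, h, one_pow]
    have hxN : (x ^ p) ^ p ^ N ≠ 1 := by rwa [← pow_mul, ← pow_succ']
    have hrec := ih hxk hxN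
    have hlt := norm_sub_one_lt_one_of_pow_prime_pow_eq_one hCp h
    have hexp : 1 ≤ (p - 1) * p ^ N :=
      Nat.mul_pos (by have := hp.out.two_le; omega) (pow_pos hp.out.pos N)
    -- Otherwise `‖x ^ p - 1‖ ≤ ‖x - 1‖ / p < 1 / p`, contradicting `hrec`.
    have hcontract : ‖x ^ p - 1‖ ≤ ‖x - 1‖ ^ p := by
      refine (le_max_iff.mp (norm_pow_sub_one_le_max hCp hlt.le)).resolve_left fun hsmall => ?_
      have hsmall' : ‖x ^ p - 1‖ < (p : ℝ)⁻¹ :=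
        hsmall.trans_lt (mul_lt_of_lt_one_right (by have := hp.out.pos; positivity) hlt)
      refine hrec.not_gt ((pow_le_of_le_one (norm_nonneg _) ?_ (by omega)).trans_lt hsmall')
      exact hsmall'.le.trans (inv_le_one_of_one_le₀ (mod_cast hp.out.one_le))
    calc (p : ℝ)⁻¹ ≤ ‖x ^ p - 1‖ ^ ((p - 1) * p ^ N) := hrec
      _ ≤ (‖x - 1‖ ^ p) ^ ((p - 1) * p ^ N) := by gcongr
      _ = ‖x - 1‖ ^ ((p - 1) * p ^ (N + 1)) := by rw [← pow_mul]; ring_nf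

theorem Set.Infinite.exists_lt_norm_sub_one (hCp : ‖(p : C)‖ = (p : ℝ)⁻¹) {Z : Set C}
    (hZ : Z.Infinite) (hroots : ∀ x ∈ Z, ∃ k, x ^ p ^ k = 1) {r : ℝ} (hr : r < 1) :
    ∃ x ∈ Z, r < ‖x - 1‖ := by
  classical
  have hp0 : (0 : ℝ) < (p : ℝ)⁻¹ := by have := hp.out.pos; positivity
  obtain ⟨N, hN⟩ := exists_pow_lt_of_lt_one hp0 hr
  have hfin : {x : C | x ^ p ^ N = 1}.Finite := by
    refine (Polynomial.nthRootsFinset (p ^ N) (1 : C)).finite_toSet.subset fun x hx => ?_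
    simpa [Polynomial.mem_nthRootsFinset (pow_pos hp.out.pos N)] using hx
  obtain ⟨x, hxZ, hxN⟩ := (hZ.sdiff hfin).nonempty
  obtain ⟨k, hk⟩ := hroots x hxZ
  refine ⟨x, hxZ, lt_of_not_ge fun hle => ?_⟩
  have hlt := norm_sub_one_lt_one_of_pow_prime_pow_eq_one hCp hk
  have hNle : N ≤ (p - 1) * p ^ N := (Nat.lt_pow_self hp.out.one_lt).le.trans
    (Nat.le_mul_of_pos_left _ (by have := hp.out.two_le; omega))
  refine (inv_le_norm_sub_one_pow_of_pow_prime_pow_ne_one hCp hk hxN).not_gt ?_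
  calc ‖x - 1‖ ^ ((p - 1) * p ^ N) ≤ ‖x - 1‖ ^ N :=
        pow_le_pow_of_le_one (norm_nonneg _) hlt.le hNle
    _ ≤ r ^ N := pow_le_pow_left₀ (norm_nonneg _) hle N
    _ < (p : ℝ)⁻¹ := hN

end RootsOfUnity

section UltrametricNorm

variable {E : Type*} [NormedAddCommGroup E] [IsUltrametricDist E]

theorem IsUltrametricDist.norm_tsum_eq_of_forall_ne_norm_le {ι : Type*} {f : ι → E}
    (hf : Summable f) {i : ι} {c : ℝ} (hc0 : 0 ≤ c) (hc : c < ‖f i‖)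
    (h : ∀ j ≠ i, ‖f j‖ ≤ c) : ‖∑' j, f j‖ = ‖f i‖ := by
  classical
  have hrest : ‖∑' j, if j = i then 0 else f j‖ ≤ c :=
    IsUltrametricDist.norm_tsum_le_of_forall_le_of_nonneg hc0 fun j => by
      split_ifs with hj
      · simpa using hc0
      · exact h j hj
  rw [hf.tsum_eq_add_tsum_ite i, IsUltrametricDist.norm_add_eq_max_of_norm_ne_norm
    (hrest.trans_lt hc).ne', max_eq_left (hrest.trans hc.le)]

theorem IsUltrametricDist.finite_norm_image_of_isCompact {K : Set E} (hK : IsCompact K)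
    (h0 : (0 : E) ∉ K) : (norm '' K).Finite := by
  -- the norm is constant on each sphere around `0`, and these spheres are open
  obtain ⟨t, htK, hcover⟩ := hK.elim_nhds_subcover (fun x => Metric.sphere 0 ‖x‖) fun x hx =>
    (IsUltrametricDist.isOpen_sphere 0
      (norm_ne_zero_iff.mpr (ne_of_mem_of_not_mem hx h0))).mem_nhds (by simp)
  refine (t.finite_toSet.image norm).subset ?_
  rintro _ ⟨y, hy, rfl⟩
  obtain ⟨x, hx, hyx⟩ := Set.mem_iUnion₂.mp (hcover hy)
  exact ⟨x, hx, by simpa using hyx.symm⟩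

theorem IsUltrametricDist.exists_forall_norm_le [ProperSpace E] {ι : Type*} [Nonempty ι]
    (a : ι → E) {R : ℝ} (ha : ∀ m, ‖a m‖ ≤ R) : ∃ d, ∀ m, ‖a m‖ ≤ ‖a d‖ := by
  by_cases hzero : ∃ j, a j ≠ 0
  swap
  · simp only [not_exists, not_not] at hzero
    exact ⟨Classical.arbitrary ι, fun m => by simp [hzero]⟩
  obtain ⟨j, hj⟩ := hzero
  set b := ‖a j‖
  have hK : IsCompact (Metric.closedBall (0 : E) R \ Metric.ball 0 b) :=
    (isCompact_closedBall 0 R).diff Metric.isOpen_ball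
  have hV : ((fun m => ‖a m‖) '' {m | b ≤ ‖a m‖}).Finite := by
    refine (IsUltrametricDist.finite_norm_image_of_isCompact hK (by simp [b, hj])).subset ?_
    rintro _ ⟨m, hm, rfl⟩
    exact ⟨a m, ⟨by simpa using ha m, by simpa using hm⟩, rfl⟩
  obtain ⟨_, ⟨d, hd, rfl⟩, hmax⟩ := Set.exists_max_image _ id hV ⟨b, j, le_refl b, rfl⟩
  refine ⟨d, fun m => ?_⟩
  by_cases hm : b ≤ ‖a m‖
  · exact hmax _ ⟨m, hm, rfl⟩
  · exact (not_le.mp hm).le.trans hd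

theorem IsUltrametricDist.exists_forall_norm_le_and_forall_lt_norm_lt [ProperSpace E] (a : ℕ → E)
    {R : ℝ} (ha : ∀ m, ‖a m‖ ≤ R) :
    ∃ d, (∀ m, ‖a m‖ ≤ ‖a d‖) ∧ ∀ m < d, ‖a m‖ < ‖a d‖ := by
  classical
  have hex := IsUltrametricDist.exists_forall_norm_le a ha
  refine ⟨Nat.find hex, Nat.find_spec hex, fun m hm => lt_of_not_ge fun hge => ?_⟩
  exact Nat.find_min hex hm fun n => (Nat.find_spec hex n).trans hge

end UltrametricNorm

theorem exists_norm_tsum_mul_pow_eq {C : Type*} [NormedField C] [IsUltrametricDist C]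
    [CompleteSpace C] (a : ℕ → C) {d : ℕ} (hd : a d ≠ 0) (hle : ∀ m, ‖a m‖ ≤ ‖a d‖)
    (hlt : ∀ m < d, ‖a m‖ < ‖a d‖) :
    ∃ r ∈ Set.Ioo (0 : ℝ) 1,
      ∀ t : C, r < ‖t‖ → ‖t‖ < 1 → ‖∑' m, a m * t ^ m‖ = ‖a d‖ * ‖t‖ ^ d := by
  have hcont : Tendsto (fun s : ℝ => ‖a d‖ * s ^ (d + 1)) (𝓝[<] 1) (𝓝 ‖a d‖) := by
    refine (Continuous.tendsto' ?_ 1 _ (by simp)).mono_left nhdsWithin_le_nhds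
    fun_prop
  have hev : ∀ᶠ s in 𝓝[<] (1 : ℝ), 0 < s ∧ ∀ m ∈ Finset.range d, ‖a m‖ ≤ ‖a d‖ * s ^ (d + 1) :=
    ((eventually_gt_nhds zero_lt_one).filter_mono nhdsWithin_le_nhds).and
      ((Finset.eventually_all _).mpr fun m hm =>
        (hcont.eventually_const_lt (hlt m (Finset.mem_range.mp hm))).mono fun _ => le_of_lt)
  obtain ⟨r, ⟨hr0, hr⟩, hr1⟩ := (hev.and self_mem_nhdsWithin).exists
  refine ⟨r, ⟨hr0, hr1⟩, fun t hrt ht1 => ?_⟩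
  have ht0 : 0 < ‖t‖ := hr0.trans hrt
  have had : 0 < ‖a d‖ := norm_pos_iff.mpr hd
  have hsum : Summable fun m => a m * t ^ m := by
    refine .of_norm_bounded ((summable_geometric_of_lt_one ht0.le ht1).mul_left ‖a d‖) fun m => ?_
    rw [norm_mul, norm_pow]
    exact mul_le_mul_of_nonneg_right (hle m) (by positivity)
  rw [← norm_pow, ← norm_mul]
  refine IsUltrametricDist.norm_tsum_eq_of_forall_ne_norm_le hsum (c := ‖a d‖ * ‖t‖ ^ (d + 1))
    (by positivity) ?_ fun m hm => ?_
  · rw [norm_mul, norm_pow]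
    exact mul_lt_mul_of_pos_left (pow_lt_pow_right_of_lt_one₀ ht0 ht1 d.lt_succ_self) had
  rw [norm_mul, norm_pow]
  rcases hm.lt_or_gt with hmd | hdm
  · calc ‖a m‖ * ‖t‖ ^ m ≤ ‖a m‖ :=
          mul_le_of_le_one_right (norm_nonneg _) (pow_le_one₀ ht0.le ht1.le)
      _ ≤ ‖a d‖ * r ^ (d + 1) := hr m (Finset.mem_range.mpr hmd)
      _ ≤ ‖a d‖ * ‖t‖ ^ (d + 1) := by gcongr
  · calc ‖a m‖ * ‖t‖ ^ m ≤ ‖a d‖ * ‖t‖ ^ m := by gcongr; exact hle m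
      _ ≤ ‖a d‖ * ‖t‖ ^ (d + 1) :=
        mul_le_mul_of_nonneg_left (pow_le_pow_of_le_one ht0.le ht1.le hdm) had.le

/-- Amice–Vélu. Let `L` be a finite extension of `ℚ_p` and let `C` be a
complete normed field isometrically containing `L` (e.g. `ℂ_p`).  If `f ∈ O_L⟦X⟧` (a power
series with integral coefficients) vanishes at `ζ - 1` for infinitely many roots of unity
`ζ ∈ C` of `p`-power order, then `f = 0`. -/
theorem power_series_vanishing_on_padic_roots_of_unity
    (p : ℕ) [hp : Fact p.Prime]
    (L : Type*) [NormedField L] [Algebra ℚ_[p] L] [FiniteDimensional ℚ_[p] L]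
    (hL : ∀ x : ℚ_[p], ‖algebraMap ℚ_[p] L x‖ = ‖x‖)
    (C : Type*) [NormedField C] [CompleteSpace C]
    (σ : L →+* C) (hσ : ∀ x : L, ‖σ x‖ = ‖x‖)
    (f : PowerSeries L) (hf : ∀ k : ℕ, ‖PowerSeries.coeff k f‖ ≤ 1)
    (hzeros : {ζ : C | (∃ k : ℕ, ζ ^ p ^ k = 1) ∧
        ∑' m : ℕ, σ (PowerSeries.coeff m f) * (ζ - 1) ^ m = 0}.Infinite) :
    f = 0 := by
  let _ : NormedSpace ℚ_[p] L := ⟨fun c x => by rw [Algebra.smul_def, norm_mul, hL]⟩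
  have : ProperSpace L := FiniteDimensional.proper ℚ_[p] L
  have hnat : ∀ n : ℕ, ‖(n : L)‖ = ‖(n : ℚ_[p])‖ := fun n => by
    rw [← map_natCast (algebraMap ℚ_[p] L), hL]
  have : IsUltrametricDist L := .isUltrametricDist_of_forall_norm_natCast_le_one fun n => by
    simpa [hnat] using Padic.norm_int_le_one (p := p) n
  have : IsUltrametricDist C := .isUltrametricDist_of_forall_norm_natCast_le_one fun n => by
    rw [← map_natCast σ, hσ]; exact IsUltrametricDist.norm_natCast_le_one L n
  have hCp : ‖(p : C)‖ = (p : ℝ)⁻¹ := by rw [← map_natCast σ, hσ, hnat, Padic.norm_p]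
  by_contra hf0
  obtain ⟨d, hle, hlt⟩ :=
    IsUltrametricDist.exists_forall_norm_le_and_forall_lt_norm_lt (PowerSeries.coeff · f) hf
  have hd : PowerSeries.coeff d f ≠ 0 := by
    obtain ⟨n, hn⟩ : ∃ n, PowerSeries.coeff n f ≠ 0 := by
      by_contra! h
      exact hf0 (PowerSeries.ext fun n => by simp [h n])
    exact norm_pos_iff.mp ((norm_pos_iff.mpr hn).trans_le (hle n))
  obtain ⟨r, ⟨hr0, hr1⟩, hr⟩ := exists_norm_tsum_mul_pow_eq (fun m => σ (PowerSeries.coeff m f))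
    (by simpa [← norm_pos_iff, hσ] using hd) (by simpa [hσ] using hle) (by simpa [hσ] using hlt)
  obtain ⟨ζ, ⟨⟨k, hk⟩, hzero⟩, hrζ⟩ := hzeros.exists_lt_norm_sub_one hCp (fun ζ hζ => hζ.1) hr1
  have := hr (ζ - 1) hrζ (norm_sub_one_lt_one_of_pow_prime_pow_eq_one hCp hk)
  rw [hzero, norm_zero, hσ] at this
  exact (mul_pos (norm_pos_iff.mpr hd) (pow_pos (hr0.trans hrζ) d)).ne this
end

section
/- Let p be a prime, μ the Haar measure on ℚ_p with μ(ℤ_p) = 1, ψ(t) = e^{2πi·{t}_p} the standard additive character, and β: ℚ_p^× → ℂ^× an unramified multiplicative character (trivial on ℤ_p^×) with |β(p)| < 1. Then lim_{N→∞} ∫_{{t : v(t) ≥ −N}} β(t)ψ(t) dμ(t) exists, the integrals stabilize for N ≥ 1, and the value equals (1 − β(p)^{−1}) / (1 − β(p)·p^{−1}). -/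
open MeasureTheory

/-- For every `t ∈ ℚ_p` there is an `n` with `p^n · t ∈ ℤ_p`. -/
theorem exists_pow_mul_norm_le (p : ℕ) [hp : Fact p.Prime] (t : ℚ_[p]) :
    ∃ n : ℕ, ‖(p : ℚ_[p]) ^ n * t‖ ≤ 1 := by
  obtain ⟨n, hn⟩ : ∃ n : ℕ, ‖t‖ < (p : ℝ) ^ n :=
    pow_unbounded_of_one_lt _ (by exact_mod_cast hp.out.one_lt)
  refine ⟨n, ?_⟩
  have hppos : (0 : ℝ) < (p : ℝ) ^ n := by
    have : (0 : ℝ) < (p : ℝ) := by exact_mod_cast hp.out.pos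
    positivity
  rw [norm_mul, norm_pow, Padic.norm_p, inv_pow]
  calc ((p : ℝ) ^ n)⁻¹ * ‖t‖ ≤ ((p : ℝ) ^ n)⁻¹ * (p : ℝ) ^ n :=
        mul_le_mul_of_nonneg_left hn.le (by positivity)
    _ = 1 := inv_mul_cancel₀ (ne_of_gt hppos)

/-- The `p`-adic fractional part `{t}_p ∈ ℤ[1/p] ∩ [0, 1)` of `t ∈ ℚ_p`, i.e. the unique
rational of this form with `t - {t}_p ∈ ℤ_p`; it is computed from the canonical mod-`p^n`
approximation `PadicInt.appr` of `p^n · t ∈ ℤ_p`. -/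
noncomputable def padicFract (p : ℕ) [hp : Fact p.Prime] (t : ℚ_[p]) : ℚ :=
  ((PadicInt.appr
      (⟨(p : ℚ_[p]) ^ (exists_pow_mul_norm_le p t).choose * t,
        (exists_pow_mul_norm_le p t).choose_spec⟩ : ℤ_[p])
      (exists_pow_mul_norm_le p t).choose : ℚ)) /
    (p : ℚ) ^ (exists_pow_mul_norm_le p t).choose

/-- The standard additive character `ψ(t) = e^{2πi·{t}_p}` of `ℚ_p`. -/
noncomputable def padicChar (p : ℕ) [Fact p.Prime] (t : ℚ_[p]) : ℂ :=
  Complex.exp (2 * Real.pi * Complex.I * (padicFract p t : ℂ))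

open Filter
open scoped Classical

/-!
An unramified `β` is `t ↦ b ^ v(t)` with `b = β(p)`, so on the sphere `‖t‖ = p ^ n` the integrand
is `b ^ (-n) · ψ`. The character `ψ` is trivial on `ℤ_p`, and its integral over the ball of radius
`p ^ n`, `n ≥ 1`, vanishes because the ball is invariant under translation by `1/p`, where
`ψ ≠ 1`. Hence the unit ball contributes `∑_{m ≥ 0} b ^ m μ(‖t‖ = p ^ (-m)) = (1 - 1/p)/(1 - b/p)`,
the sphere `‖t‖ = p` contributes `b⁻¹ (0 - 1)` and the larger spheres nothing. The volumes come
from `μ(‖t‖ ≤ p ^ (n + 1)) = p · μ(‖t‖ ≤ p ^ n)`: the larger ball is a disjoint union of `p`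
translates of the smaller one.
-/

open Metric

section

variable {p : ℕ} [hp : Fact p.Prime]

theorem den_padicFract_dvd_pow (t : ℚ_[p]) : ∃ n : ℕ, (padicFract p t).den ∣ p ^ n := by
  have key (a n : ℕ) : ((a : ℚ) / (p : ℚ) ^ n).den ∣ p ^ n := by
    have hden : ((p : ℚ) ^ n)⁻¹.den = p ^ n := by
      exact_mod_cast Rat.inv_natCast_den_of_pos (pow_pos hp.out.pos n)
    rw [div_eq_mul_inv]
    exact (Rat.mul_den_dvd _ _).trans (by simp [hden])
  exact ⟨_, key _ _⟩

theorem norm_sub_padicFract_le_one (t : ℚ_[p]) : ‖t - (padicFract p t : ℚ_[p])‖ ≤ 1 := by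
  set n := (exists_pow_mul_norm_le p t).choose
  set x : ℤ_[p] := ⟨(p : ℚ_[p]) ^ n * t, (exists_pow_mul_norm_le p t).choose_spec⟩ with hx
  have happr : ‖x - (x.appr n : ℤ_[p])‖ ≤ (p : ℝ) ^ (-(n : ℤ)) :=
    (PadicInt.norm_le_pow_iff_mem_span_pow _ n).mpr (PadicInt.appr_spec n x)
  have hsub : t - (padicFract p t : ℚ_[p]) =
      (p : ℚ_[p]) ^ (-(n : ℤ)) * ((x - (x.appr n : ℤ_[p]) : ℤ_[p]) : ℚ_[p]) := by
    have hF : padicFract p t = (x.appr n : ℚ) / (p : ℚ) ^ n := rfl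
    have hpn : (p : ℚ_[p]) ^ n ≠ 0 := pow_ne_zero _ (Nat.cast_ne_zero.mpr hp.out.ne_zero)
    rw [hF, PadicInt.coe_sub, hx, zpow_neg, zpow_natCast]
    push_cast
    field_simp
  rw [hsub, norm_mul, Padic.norm_p_zpow, neg_neg, ← PadicInt.norm_def]
  calc (p : ℝ) ^ (n : ℤ) * ‖x - (x.appr n : ℤ_[p])‖
      ≤ (p : ℝ) ^ (n : ℤ) * (p : ℝ) ^ (-(n : ℤ)) := by gcongr
    _ = 1 := by rw [← zpow_add₀ (by exact_mod_cast hp.out.ne_zero)]; simp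

theorem Rat.den_eq_one_of_den_dvd_pow_of_norm_le_one {q : ℚ} {n : ℕ} (hq : q.den ∣ p ^ n)
    (h : ‖(q : ℚ_[p])‖ ≤ 1) : q.den = 1 := by
  have hunit : ¬ p ∣ q.den := by
    rw [← PadicInt.norm_natCast_lt_one_iff, PadicInt.isUnit_iff.mp (PadicInt.isUnit_den q h)]
    exact lt_irrefl 1
  exact Nat.Coprime.eq_one_of_dvd
    (((Nat.Prime.coprime_iff_not_dvd hp.out).mpr hunit).symm.pow_right n) hq

open Complex in
theorem padicChar_eq_exp_of_norm_sub_le {t : ℚ_[p]} {q : ℚ} {n : ℕ} (hq : q.den ∣ p ^ n)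
    (h : ‖t - q‖ ≤ 1) : padicChar p t = exp (2 * Real.pi * I * q) := by
  obtain ⟨m, hm⟩ := den_padicFract_dvd_pow t
  set r := padicFract p t - q
  have hr_den : r.den ∣ p ^ (m + n) :=
    (Rat.sub_den_dvd _ _).trans (pow_add p m n ▸ Nat.mul_dvd_mul hm hq)
  have hr_norm : ‖(r : ℚ_[p])‖ ≤ 1 := by
    have hr : (r : ℚ_[p]) = (t - q) + (padicFract p t - t) := by push_cast [r]; ring
    rw [hr]
    exact (IsUltrametricDist.norm_add_le_max _ _).trans
      (max_le h (norm_sub_rev t _ ▸ norm_sub_padicFract_le_one t))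
  -- `r` lies in `ℤ[1/p] ∩ ℤ_p = ℤ`
  have hfract : padicFract p t = q + r.num := by
    rw [Rat.coe_int_num_of_den_eq_one (Rat.den_eq_one_of_den_dvd_pow_of_norm_le_one hr_den hr_norm)]
    ring
  rw [padicChar, hfract]
  push_cast
  rw [mul_add, exp_add, mul_comm _ (r.num : ℂ), exp_int_mul_two_pi_mul_I, mul_one]

theorem padicChar_eq_one_of_norm_le_one {t : ℚ_[p]} (ht : ‖t‖ ≤ 1) : padicChar p t = 1 := by
  rw [padicChar_eq_exp_of_norm_sub_le (q := 0) (n := 0) (by simp) (by simpa using ht)]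
  simp

theorem padicChar_add (t s : ℚ_[p]) : padicChar p (t + s) = padicChar p t * padicChar p s := by
  obtain ⟨m, hm⟩ := den_padicFract_dvd_pow t
  obtain ⟨n, hn⟩ := den_padicFract_dvd_pow s
  have hden : (padicFract p t + padicFract p s).den ∣ p ^ (m + n) :=
    (Rat.add_den_dvd _ _).trans (pow_add p m n ▸ Nat.mul_dvd_mul hm hn)
  have hnorm : ‖t + s - ((padicFract p t + padicFract p s : ℚ) : ℚ_[p])‖ ≤ 1 := by
    have : t + s - ((padicFract p t + padicFract p s : ℚ) : ℚ_[p]) =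
        (t - padicFract p t) + (s - padicFract p s) := by push_cast; ring
    rw [this]
    exact (IsUltrametricDist.norm_add_le_max _ _).trans
      (max_le (norm_sub_padicFract_le_one t) (norm_sub_padicFract_le_one s))
  rw [padicChar_eq_exp_of_norm_sub_le hden hnorm, padicChar, padicChar, ← Complex.exp_add]
  push_cast
  ring_nf

theorem padicChar_inv_p_ne_one : padicChar p (p : ℚ_[p])⁻¹ ≠ 1 := by
  have hden : ((p : ℚ)⁻¹).den ∣ p ^ 1 := by
    rw [Rat.inv_natCast_den_of_pos hp.out.pos, pow_one]
  rw [padicChar_eq_exp_of_norm_sub_le hden (by simp), Rat.cast_inv, Rat.cast_natCast,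
    ← div_eq_mul_inv]
  exact (Complex.isPrimitiveRoot_exp p hp.out.ne_zero).ne_one hp.out.one_lt

theorem norm_padicChar (t : ℚ_[p]) : ‖padicChar p t‖ = 1 := by
  rw [padicChar, show 2 * (Real.pi : ℂ) * Complex.I * (padicFract p t : ℂ) =
    ((2 * Real.pi * padicFract p t : ℝ) : ℂ) * Complex.I by push_cast; ring]
  exact Complex.norm_exp_ofReal_mul_I _

theorem continuous_padicChar : Continuous (padicChar p) := by
  refine IsLocallyConstant.continuous ((IsLocallyConstant.iff_eventually_eq _).mpr fun t => ?_)
  filter_upwards [closedBall_mem_nhds t one_pos] with s hs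
  rw [← add_sub_cancel t s, padicChar_add, padicChar_eq_one_of_norm_le_one (t := s - t)
    (by rwa [← dist_eq_norm]), mul_one]

variable (p) in
noncomputable def padicAddChar : AddChar ℚ_[p] ℂ where
  toFun := padicChar p
  map_zero_eq_one' := padicChar_eq_one_of_norm_le_one (by simp)
  map_add_eq_mul' := padicChar_add

namespace Padic

theorem exists_natCast_lt_norm_sub_le {x : ℚ_[p]} (hx : ‖x‖ ≤ 1) :
    ∃ j < p, ‖x - j‖ ≤ (p : ℝ) ^ (-1 : ℤ) := by
  obtain ⟨j, hj, hmem⟩ := PadicInt.exists_mem_range (⟨x, hx⟩ : ℤ_[p])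
  refine ⟨j, hj, ?_⟩
  rw [norm_le_pow_iff_norm_lt_pow_add_one, neg_add_cancel, zpow_zero]
  exact PadicInt.mem_nonunits.mp ((IsLocalRing.mem_maximalIdeal _).mp hmem)

theorem closedBall_zpow_add_one_eq_iUnion (n : ℤ) :
    closedBall (0 : ℚ_[p]) (p ^ (n + 1)) =
      ⋃ j : Fin p, closedBall ((j : ℚ_[p]) * p ^ (-(n + 1))) (p ^ n) := by
  have hp0 : (0 : ℝ) < p := by exact_mod_cast hp.out.pos
  ext t
  simp only [Set.mem_iUnion, mem_closedBall, dist_eq_norm, sub_zero]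
  constructor
  · intro ht
    have hx : ‖t * (p : ℚ_[p]) ^ (n + 1)‖ ≤ 1 := by
      rw [norm_mul, norm_p_zpow, zpow_neg, ← div_eq_mul_inv]
      exact div_le_one_of_le₀ ht (by positivity)
    obtain ⟨j, hj, hdist⟩ := exists_natCast_lt_norm_sub_le hx
    refine ⟨⟨j, hj⟩, ?_⟩
    have hpn : (p : ℚ_[p]) ^ (n + 1) ≠ 0 := zpow_ne_zero _ (Nat.cast_ne_zero.mpr hp.out.ne_zero)
    have hsub : t - (j : ℚ_[p]) * p ^ (-(n + 1)) = (t * p ^ (n + 1) - j) * p ^ (-(n + 1)) := by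
      rw [sub_mul, mul_assoc, ← zpow_add₀ (Nat.cast_ne_zero.mpr hp.out.ne_zero)]
      simp
    rw [Fin.val_mk, hsub, norm_mul, norm_p_zpow, neg_neg]
    calc ‖t * (p : ℚ_[p]) ^ (n + 1) - j‖ * (p : ℝ) ^ (n + 1)
        ≤ (p : ℝ) ^ (-1 : ℤ) * (p : ℝ) ^ (n + 1) := by gcongr
      _ = (p : ℝ) ^ n := by rw [← zpow_add₀ hp0.ne']; ring_nf
  · rintro ⟨j, hj⟩
    have hc : ‖(j : ℚ_[p]) * (p : ℚ_[p]) ^ (-(n + 1))‖ ≤ (p : ℝ) ^ (n + 1) := by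
      rw [norm_mul, norm_p_zpow, neg_neg]
      exact mul_le_of_le_one_left (by positivity) (by simpa using norm_int_le_one (j : ℤ))
    calc ‖t‖ = ‖(t - (j : ℚ_[p]) * p ^ (-(n + 1))) + (j : ℚ_[p]) * p ^ (-(n + 1))‖ := by
          rw [sub_add_cancel]
      _ ≤ (p : ℝ) ^ (n + 1) :=
          (IsUltrametricDist.norm_add_le_max _ _).trans (max_le (hj.trans
            (zpow_le_zpow_right₀ (by exact_mod_cast hp.out.one_le) (by omega))) hc)

theorem pairwise_disjoint_closedBall_natCast_mul_zpow (n : ℤ) :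
    Pairwise (Function.onFun Disjoint
      fun j : Fin p => closedBall ((j : ℚ_[p]) * p ^ (-(n + 1))) (p ^ n)) := by
  have hp1 : (1 : ℝ) < p := by exact_mod_cast hp.out.one_lt
  intro i j hij
  refine Set.disjoint_left.mpr fun t hi hj => hij ?_
  have hdist : ‖(((i : ℤ) - j : ℤ) : ℚ_[p])‖ * (p : ℝ) ^ (n + 1) ≤ (p : ℝ) ^ n := by
    have := (dist_triangle_max _ t _).trans (max_le (mem_closedBall'.mp hi) hj)
    rw [dist_eq_norm, ← sub_mul, norm_mul, norm_p_zpow, neg_neg] at this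
    exact_mod_cast this
  have hlt : ‖(((i : ℤ) - j : ℤ) : ℚ_[p])‖ < 1 := by
    by_contra! hge
    have := (le_mul_of_one_le_left (by positivity) hge).trans hdist
    exact absurd this (not_le.mpr (zpow_lt_zpow_right₀ hp1 (by omega)))
  have hzero := Int.eq_zero_of_abs_lt_dvd (norm_intCast_lt_one_iff.mp hlt)
    (by have := i.isLt; have := j.isLt; rw [abs_lt]; omega)
  exact Fin.ext (by omega)

theorem valuation_eq_neg_of_norm_eq_zpow {t : ℚ_[p]} {n : ℤ} (ht : ‖t‖ = p ^ n) :
    t.valuation = -n := by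
  have ht0 : t ≠ 0 := by
    rintro rfl
    exact (zpow_pos (by exact_mod_cast hp.out.pos : (0 : ℝ) < p) n).ne' (ht.symm.trans norm_zero)
  rw [norm_eq_zpow_neg_valuation ht0] at ht
  exact neg_eq_iff_eq_neg.mp (zpow_right_injective₀ (by exact_mod_cast hp.out.pos)
    (by exact_mod_cast hp.out.ne_one) ht)

theorem sphere_zpow_eq_sdiff (n : ℤ) :
    sphere (0 : ℚ_[p]) (p ^ n) = closedBall 0 (p ^ n) \ closedBall 0 (p ^ (n - 1)) := by
  have hball : closedBall (0 : ℚ_[p]) (p ^ (n - 1)) = ball 0 (p ^ n) := by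
    ext t
    simpa [sub_add_cancel] using norm_le_pow_iff_norm_lt_pow_add_one t (n - 1)
  rw [hball, closedBall_sdiff_ball]

theorem closedBall_one_sdiff_zero_eq_iUnion_sphere :
    closedBall (0 : ℚ_[p]) 1 \ {0} = ⋃ m : ℕ, sphere 0 (p ^ (-(m : ℤ))) := by
  ext t
  simp only [Set.mem_sdiff, mem_closedBall_zero_iff, Set.mem_singleton_iff, Set.mem_iUnion,
    mem_sphere_zero_iff_norm]
  constructor
  · rintro ⟨ht, ht0⟩
    refine ⟨t.valuation.toNat, ?_⟩
    rw [norm_eq_zpow_neg_valuation ht0, Int.toNat_of_nonneg ((norm_le_one_iff_val_nonneg t).mp ht)]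
  · rintro ⟨m, hm⟩
    refine ⟨hm ▸ zpow_le_one_of_nonpos₀ (by exact_mod_cast hp.out.one_le) (by omega), ?_⟩
    rintro rfl
    exact (zpow_pos (by exact_mod_cast hp.out.pos : (0 : ℝ) < p) _).ne' (hm.symm.trans norm_zero)

theorem pairwise_disjoint_sphere_zpow_neg :
    Pairwise (Function.onFun Disjoint fun m : ℕ => sphere (0 : ℚ_[p]) (p ^ (-(m : ℤ)))) := by
  intro i j hij
  refine Set.disjoint_left.mpr fun t hi hj => hij ?_
  rw [mem_sphere_zero_iff_norm] at hi hj
  have := zpow_right_injective₀ (by exact_mod_cast hp.out.pos : (0 : ℝ) < p)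
    (by exact_mod_cast hp.out.ne_one) (hi.symm.trans hj)
  omega

theorem apply_unit_eq_zpow_valuation {M : Type*} [Group M] (β : ℚ_[p]ˣ →* M)
    (hβ : ∀ u : ℚ_[p]ˣ, ‖(u : ℚ_[p])‖ = 1 → β u = 1) {up : ℚ_[p]ˣ} (hup : (up : ℚ_[p]) = p)
    (u : ℚ_[p]ˣ) : β u = β up ^ (u : ℚ_[p]).valuation := by
  set v := (u : ℚ_[p]).valuation
  have hnorm : ‖((u * up ^ (-v) : ℚ_[p]ˣ) : ℚ_[p])‖ = 1 := by
    rw [Units.val_mul, Units.val_zpow_eq_zpow_val, hup, norm_mul, norm_p_zpow, neg_neg,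
      norm_eq_zpow_neg_valuation u.ne_zero, ← zpow_add₀ (by exact_mod_cast hp.out.ne_zero)]
    simp [v]
  calc β u = β (u * up ^ (-v)) * β up ^ v := by
        rw [map_mul, map_zpow, mul_assoc, ← zpow_add, neg_add_cancel, zpow_zero, mul_one]
    _ = β up ^ v := by rw [hβ _ hnorm, one_mul]

theorem continuousOn_mul_padicChar {b : ℂ} {χ : ℚ_[p] → ℂ}
    (hχ : ∀ t, t ≠ 0 → χ t = b ^ t.valuation) :
    ContinuousOn (fun t => χ t * padicChar p t) {0}ᶜ := by
  intro t ht
  have ht0 : t ≠ 0 := ht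
  have hlocal : (fun s => χ s * padicChar p s) =ᶠ[nhds t] fun s => χ t * padicChar p s := by
    filter_upwards [ball_mem_nhds t (norm_pos_iff.mpr ht0)] with s hs
    have hnorm : ‖s‖ = ‖t‖ := by
      rw [mem_ball, dist_eq_norm] at hs
      rw [← sub_add_cancel s t, IsUltrametricDist.norm_add_eq_max_of_norm_ne_norm hs.ne,
        max_eq_right hs.le]
    have hs0 : s ≠ 0 := norm_ne_zero_iff.mp (hnorm ▸ norm_ne_zero_iff.mpr ht0)
    rw [hχ s hs0, hχ t ht0, valuation_eq_neg_of_norm_eq_zpow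
      (hnorm.trans (norm_eq_zpow_neg_valuation ht0)), neg_neg]
  exact ((continuous_const.mul continuous_padicChar).continuousAt.congr
    hlocal.symm).continuousWithinAt

end Padic

theorem norm_mul_inv_natCast_lt_one {b : ℂ} (hb : ‖b‖ < 1) (n : ℕ) : ‖b * (n : ℂ)⁻¹‖ < 1 := by
  rw [norm_mul, norm_inv, Complex.norm_natCast]
  exact (mul_le_of_le_one_right (norm_nonneg b) n.cast_inv_le_one).trans_lt hb

theorem AddChar.setIntegral_eq_zero_of_map_ne_one {G 𝕜 : Type*} [AddGroup G] [MeasurableSpace G]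
    [MeasurableAdd G] [RCLike 𝕜] {μ : Measure G} [μ.IsAddLeftInvariant] (ψ : AddChar G 𝕜)
    {s : Set G} {a : G} (hs : (a + ·) ⁻¹' s = s) (ha : ψ a ≠ 1) : ∫ x in s, ψ x ∂μ = 0 := by
  have hinv : ∫ x in s, ψ x ∂μ = ψ a * ∫ x in s, ψ x ∂μ :=
    calc ∫ x in s, ψ x ∂μ = ∫ x in (a + ·) ⁻¹' s, ψ (a + x) ∂μ :=
          ((measurePreserving_add_left μ a).setIntegral_preimage_emb
            (measurableEmbedding_addLeft a) _ _).symm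
      _ = ψ a * ∫ x in s, ψ x ∂μ := by simp_rw [hs, AddChar.map_add_eq_mul, integral_const_mul]
  have hzero : (1 - ψ a) * ∫ x in s, ψ x ∂μ = 0 := by linear_combination hinv
  exact (mul_eq_zero.mp hzero).resolve_left (sub_ne_zero.mpr ha.symm)

namespace Padic

variable [MeasurableSpace ℚ_[p]] [BorelSpace ℚ_[p]] (μ : Measure ℚ_[p])

theorem measureReal_closedBall_zpow_add_one [μ.IsAddHaarMeasure] (n : ℤ) :
    μ.real (closedBall 0 (p ^ (n + 1))) = p * μ.real (closedBall (0 : ℚ_[p]) (p ^ n)) := by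
  rw [closedBall_zpow_add_one_eq_iUnion, measureReal_iUnion_fintype
    (pairwise_disjoint_closedBall_natCast_mul_zpow n) (fun _ => measurableSet_closedBall)
    (fun _ => measure_closedBall_lt_top.ne)]
  simp [measureReal_def, Measure.addHaar_closedBall_center]

theorem measureReal_closedBall_zpow [μ.IsAddHaarMeasure] (n : ℤ) :
    μ.real (closedBall 0 (p ^ n)) = p ^ n * μ.real (closedBall (0 : ℚ_[p]) 1) := by
  have hp0 : (p : ℝ) ≠ 0 := by exact_mod_cast hp.out.ne_zero
  induction n using Int.induction_on with
  | zero => simp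
  | succ k ih => rw [measureReal_closedBall_zpow_add_one, ih, zpow_add_one₀ hp0]; ring
  | pred k ih =>
    have h := measureReal_closedBall_zpow_add_one μ (-k - 1)
    rw [sub_add_cancel, ih] at h
    apply mul_left_cancel₀ hp0
    rw [← h, zpow_sub_one₀ hp0]
    field_simp

theorem integrableOn_padicChar_closedBall [μ.IsAddHaarMeasure] (r : ℝ) :
    IntegrableOn (padicChar p) (closedBall 0 r) μ :=
  continuous_padicChar.continuousOn.integrableOn_compact (isCompact_closedBall 0 r)

theorem setIntegral_padicChar_closedBall_of_pos [μ.IsAddHaarMeasure] {n : ℤ} (hn : 0 < n) :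
    ∫ t in closedBall 0 (p ^ n), padicChar p t ∂μ = 0 := by
  have hinv : -(p : ℚ_[p])⁻¹ ∈ closedBall 0 ((p : ℝ) ^ n) := by
    rw [mem_closedBall_zero_iff, norm_neg, norm_inv, norm_p, inv_inv]
    calc (p : ℝ) = p ^ (1 : ℤ) := (zpow_one _).symm
      _ ≤ p ^ n := zpow_le_zpow_right₀ (by exact_mod_cast hp.out.one_le) hn
  have hball : ((p : ℚ_[p])⁻¹ + ·) ⁻¹' closedBall 0 ((p : ℝ) ^ n) = closedBall 0 (p ^ n) := by
    rw [preimage_add_closedBall, zero_sub]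
    exact (IsUltrametricDist.closedBall_eq_of_mem hinv).symm
  exact (padicAddChar p).setIntegral_eq_zero_of_map_ne_one hball padicChar_inv_p_ne_one

theorem setIntegral_padicChar_closedBall_of_nonpos {n : ℤ} (hn : n ≤ 0) :
    ∫ t in closedBall 0 (p ^ n), padicChar p t ∂μ = μ.real (closedBall 0 (p ^ n)) := by
  rw [setIntegral_congr_fun measurableSet_closedBall (g := fun _ => 1) fun t ht =>
    padicChar_eq_one_of_norm_le_one ((mem_closedBall_zero_iff.mp ht).trans
      (zpow_le_one_of_nonpos₀ (by exact_mod_cast hp.out.one_le) hn))]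
  simp

variable {b : ℂ} {χ : ℚ_[p] → ℂ}

theorem aestronglyMeasurable_mul_padicChar [μ.IsAddHaarMeasure]
    (hχ : ∀ t, t ≠ 0 → χ t = b ^ t.valuation) :
    AEStronglyMeasurable (fun t => χ t * padicChar p t) μ := by
  rw [← Measure.restrict_eq_self_of_ae_mem (μ.ae_ne 0)]
  exact (continuousOn_mul_padicChar hχ).aestronglyMeasurable isOpen_compl_singleton.measurableSet

theorem integrableOn_mul_padicChar_closedBall [μ.IsAddHaarMeasure]
    (hχ : ∀ t, t ≠ 0 → χ t = b ^ t.valuation) (hb0 : b ≠ 0) (hb : ‖b‖ ≤ 1) (n : ℤ) :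
    IntegrableOn (fun t => χ t * padicChar p t) (closedBall 0 (p ^ n)) μ := by
  refine Measure.integrableOn_of_bounded measure_closedBall_lt_top.ne
    (aestronglyMeasurable_mul_padicChar μ hχ) (M := ‖b‖ ^ (-n)) ?_
  filter_upwards [ae_restrict_mem measurableSet_closedBall, ae_restrict_of_ae (μ.ae_ne 0)]
    with t ht ht0
  have hval : -n ≤ t.valuation := by
    rw [mem_closedBall_zero_iff, norm_eq_zpow_neg_valuation ht0,
      zpow_le_zpow_iff_right₀ (by exact_mod_cast hp.out.one_lt)] at ht
    omega
  rw [norm_mul, norm_padicChar, mul_one, hχ t ht0, norm_zpow]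
  exact zpow_le_zpow_right_of_le_one₀ (norm_pos_iff.mpr hb0) hb hval

theorem setIntegral_sphere_mul_padicChar [μ.IsAddHaarMeasure]
    (hχ : ∀ t, t ≠ 0 → χ t = b ^ t.valuation) (n : ℤ) :
    ∫ t in sphere 0 (p ^ n), χ t * padicChar p t ∂μ =
      b ^ (-n) * (∫ t in closedBall 0 (p ^ n), padicChar p t ∂μ -
        ∫ t in closedBall 0 (p ^ (n - 1)), padicChar p t ∂μ) := by
  have hconst : Set.EqOn (fun t => χ t * padicChar p t) (fun t => b ^ (-n) * padicChar p t)
      (sphere 0 (p ^ n)) := fun t ht => by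
    have ht' : ‖t‖ = p ^ n := mem_sphere_zero_iff_norm.mp ht
    have ht0 : t ≠ 0 := norm_ne_zero_iff.mp (ht' ▸ (zpow_pos (by exact_mod_cast hp.out.pos) n).ne')
    simp only [hχ t ht0, valuation_eq_neg_of_norm_eq_zpow ht']
  rw [setIntegral_congr_fun isClosed_sphere.measurableSet hconst, integral_const_mul,
    sphere_zpow_eq_sdiff,
    setIntegral_sdiff measurableSet_closedBall (integrableOn_padicChar_closedBall μ _)
      (closedBall_subset_closedBall (zpow_le_zpow_right₀ (by exact_mod_cast hp.out.one_le)
        (by omega)))]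

theorem setIntegral_closedBall_mul_padicChar_eq_add [μ.IsAddHaarMeasure]
    (hχ : ∀ t, t ≠ 0 → χ t = b ^ t.valuation) (hb0 : b ≠ 0) (hb : ‖b‖ ≤ 1) (n : ℤ) :
    ∫ t in closedBall 0 (p ^ n), χ t * padicChar p t ∂μ =
      ∫ t in closedBall 0 (p ^ (n - 1)), χ t * padicChar p t ∂μ +
        b ^ (-n) * (∫ t in closedBall 0 (p ^ n), padicChar p t ∂μ -
          ∫ t in closedBall 0 (p ^ (n - 1)), padicChar p t ∂μ) := by
  rw [← setIntegral_sphere_mul_padicChar μ hχ, sphere_zpow_eq_sdiff,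
    setIntegral_sdiff measurableSet_closedBall (integrableOn_mul_padicChar_closedBall μ hχ hb0 hb n)
      (closedBall_subset_closedBall (zpow_le_zpow_right₀ (by exact_mod_cast hp.out.one_le)
        (by omega)))]
  ring

theorem setIntegral_closedBall_one_mul_padicChar [μ.IsAddHaarMeasure]
    (hχ : ∀ t, t ≠ 0 → χ t = b ^ t.valuation) (hb0 : b ≠ 0) (hb : ‖b‖ < 1) :
    ∫ t in closedBall 0 1, χ t * padicChar p t ∂μ =
      μ.real (closedBall 0 1) * (1 - (p : ℂ)⁻¹) / (1 - b * (p : ℂ)⁻¹) := by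
  have hp0 : (p : ℂ) ≠ 0 := by exact_mod_cast hp.out.ne_zero
  have hsum : HasSum (fun m : ℕ => ∫ t in sphere 0 (p ^ (-(m : ℤ))), χ t * padicChar p t ∂μ)
      (∫ t in closedBall 0 1, χ t * padicChar p t ∂μ) := by
    have hint : IntegrableOn (fun t => χ t * padicChar p t) (closedBall 0 1 \ {0}) μ := by
      simpa using (integrableOn_mul_padicChar_closedBall μ hχ hb0 hb.le 0).mono_set
        Set.sdiff_subset
    rw [← setIntegral_congr_set (sdiff_null_ae_eq_self (measure_singleton 0))]
    rw [closedBall_one_sdiff_zero_eq_iUnion_sphere] at hint ⊢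
    exact hasSum_integral_iUnion (fun _ => isClosed_sphere.measurableSet)
      pairwise_disjoint_sphere_zpow_neg hint
  have hterm (m : ℕ) : ∫ t in sphere 0 (p ^ (-(m : ℤ))), χ t * padicChar p t ∂μ =
      μ.real (closedBall 0 1) * (1 - (p : ℂ)⁻¹) * (b * (p : ℂ)⁻¹) ^ m := by
    rw [setIntegral_sphere_mul_padicChar μ hχ, setIntegral_padicChar_closedBall_of_nonpos μ
      (by omega), setIntegral_padicChar_closedBall_of_nonpos μ (by omega),
      measureReal_closedBall_zpow, measureReal_closedBall_zpow]
    push_cast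
    rw [neg_neg, zpow_natCast, zpow_sub_one₀ hp0, zpow_neg, zpow_natCast, mul_pow, inv_pow]
    ring
  simp_rw [hterm] at hsum
  rw [div_eq_mul_inv]
  exact hsum.unique
    ((hasSum_geometric_of_norm_lt_one (norm_mul_inv_natCast_lt_one hb p)).mul_left _)

theorem setIntegral_closedBall_mul_padicChar_of_one_le [μ.IsAddHaarMeasure]
    (hχ : ∀ t, t ≠ 0 → χ t = b ^ t.valuation) (hb0 : b ≠ 0) (hb : ‖b‖ ≤ 1) {n : ℤ} (hn : 1 ≤ n) :
    ∫ t in closedBall 0 (p ^ n), χ t * padicChar p t ∂μ =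
      ∫ t in closedBall 0 1, χ t * padicChar p t ∂μ - b⁻¹ * μ.real (closedBall 0 1) := by
  induction n, hn using Int.leInduction with
  | base =>
    rw [setIntegral_closedBall_mul_padicChar_eq_add μ hχ hb0 hb, sub_self, zpow_zero,
      setIntegral_padicChar_closedBall_of_pos μ zero_lt_one,
      ← zpow_zero (p : ℝ), setIntegral_padicChar_closedBall_of_nonpos μ le_rfl, zpow_neg_one]
    ring
  | succ n hn ih =>
    rw [setIntegral_closedBall_mul_padicChar_eq_add μ hχ hb0 hb, add_sub_cancel_right, ih,
      setIntegral_padicChar_closedBall_of_pos μ (by omega),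
      setIntegral_padicChar_closedBall_of_pos μ hn]
    ring

end Padic

end

/-- Let `μ` be the Haar measure on `ℚ_p` with `μ(ℤ_p) = 1`, `ψ` the standard
additive character, and `β : ℚ_p^× → ℂ^×` an unramified character with `|β(p)| < 1`.  Then the
integrals of `β·ψ` over `{v(t) ≥ -N}` stabilize for `N ≥ 1` at the value
`(1 - β(p)⁻¹)/(1 - β(p)·p⁻¹)`, and in particular converge to it as `N → ∞`. -/
theorem integral_unramified_char_mul_padicChar
    (p : ℕ) [hp : Fact p.Prime] [MeasurableSpace ℚ_[p]] [BorelSpace ℚ_[p]]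
    (μ : Measure ℚ_[p]) [μ.IsAddHaarMeasure]
    (hμ : μ {x : ℚ_[p] | ‖x‖ ≤ 1} = 1)
    (β : ℚ_[p]ˣ →* ℂˣ)
    (hβ : ∀ u : ℚ_[p]ˣ, ‖(u : ℚ_[p])‖ = 1 → β u = 1)
    (up : ℚ_[p]ˣ) (hup : (up : ℚ_[p]) = (p : ℚ_[p]))
    (hb : ‖((β up : ℂˣ) : ℂ)‖ < 1) :
    (∀ N : ℕ, 1 ≤ N →
      ∫ t in {t : ℚ_[p] | ‖t‖ ≤ (p : ℝ) ^ (N : ℤ)},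
          (if h : t = 0 then 0 else ((β (Units.mk0 t h) : ℂˣ) : ℂ)) * padicChar p t ∂μ =
        (1 - (((β up : ℂˣ) : ℂ))⁻¹) / (1 - ((β up : ℂˣ) : ℂ) * (p : ℂ)⁻¹)) ∧
    Tendsto (fun N : ℕ =>
        ∫ t in {t : ℚ_[p] | ‖t‖ ≤ (p : ℝ) ^ (N : ℤ)},
          (if h : t = 0 then 0 else ((β (Units.mk0 t h) : ℂˣ) : ℂ)) * padicChar p t ∂μ)
      atTop
      (nhds ((1 - (((β up : ℂˣ) : ℂ))⁻¹) / (1 - ((β up : ℂˣ) : ℂ) * (p : ℂ)⁻¹))) := by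
  have hχ (t : ℚ_[p]) (ht : t ≠ 0) :
      (if h : t = 0 then 0 else ((β (Units.mk0 t h) : ℂˣ) : ℂ)) = (β up : ℂ) ^ t.valuation := by
    rw [dif_neg ht, Padic.apply_unit_eq_zpow_valuation β hβ hup, Units.val_zpow_eq_zpow_val,
      Units.val_mk0]
  have hb0 : (β up : ℂ) ≠ 0 := Units.ne_zero _
  have hμ1 : μ.real (closedBall 0 1) = 1 := by
    have hball : closedBall (0 : ℚ_[p]) 1 = {x | ‖x‖ ≤ 1} := by ext; simp
    rw [measureReal_def, hball, hμ, ENNReal.toReal_one]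
  have hden : 1 - (β up : ℂ) * (p : ℂ)⁻¹ ≠ 0 :=
    sub_ne_zero.mpr fun h => (norm_mul_inv_natCast_lt_one hb p).ne (by rw [← h, norm_one])
  have hstable (N : ℕ) (hN : 1 ≤ N) :
      ∫ t in {t : ℚ_[p] | ‖t‖ ≤ (p : ℝ) ^ (N : ℤ)},
          (if h : t = 0 then 0 else ((β (Units.mk0 t h) : ℂˣ) : ℂ)) * padicChar p t ∂μ =
        (1 - (((β up : ℂˣ) : ℂ))⁻¹) / (1 - ((β up : ℂˣ) : ℂ) * (p : ℂ)⁻¹) := by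
    rw [show {t : ℚ_[p] | ‖t‖ ≤ (p : ℝ) ^ (N : ℤ)} = closedBall 0 (p ^ (N : ℤ)) by ext; simp,
      Padic.setIntegral_closedBall_mul_padicChar_of_one_le μ hχ hb0 hb.le (by exact_mod_cast hN),
      Padic.setIntegral_closedBall_one_mul_padicChar μ hχ hb0 hb, hμ1, Complex.ofReal_one,
      div_sub' hden]
    congr 1
    field_simp
    ring
  exact ⟨hstable, tendsto_atTop_of_eventually_const hstable⟩
end
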